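/- The discrete layered entropy Λ is a concave function on the convex set of probability mass functions: for pmfs p, q and λ ∈ [0,1], Λ(λp + (1−λ)q) ≥ λΛ(p) + (1−λ)Λ(q). -/

import Mathlib

noncomputable def lamt (i : ℕ) : ℝ :=
  ((i : ℝ) + 1) * Real.logb 2 ((i : ℝ) + 1) - (i : ℝ) * Real.logb 2 (i : ℝ)

def IsPMF {X : Type*} (p : X → ℝ) : Prop := (∀ x, 0 ≤ p x) ∧ HasSum p 1

def IsDescRearrange {X : Type*} (p : X → ℝ) (q : ℕ → ℝ) : Prop :=
  Antitone q ∧ ∀ t : ℝ, 0 < t → {x | t < p x}.ncard = {i | t < q i}.ncard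

section Aux

lemma lamt_zero : lamt 0 = 0 := by
  simp [lamt]

lemma lamt_mono : Monotone lamt := by
  apply monotone_nat_of_le_succ
  intro n
  have hlog2 : (0:ℝ) < Real.log 2 := Real.log_pos (by norm_num)
  have key : ((n:ℝ) + 1) * Real.log ((n:ℝ) + 1) ≤
      ((n:ℝ) * Real.log (n:ℝ) + ((n:ℝ) + 2) * Real.log ((n:ℝ) + 2)) / 2 := by
    have h := Real.convexOn_mul_log.2 (Set.mem_Ici.2 (by positivity : (0:ℝ) ≤ (n:ℝ)))
      (Set.mem_Ici.2 (by positivity : (0:ℝ) ≤ (n:ℝ) + 2))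
      (by norm_num : (0:ℝ) ≤ 1/2) (by norm_num : (0:ℝ) ≤ 1/2) (by norm_num)
    have he : (1/2 : ℝ) • (n:ℝ) + (1/2 : ℝ) • ((n:ℝ) + 2) = (n:ℝ) + 1 := by
      simp [smul_eq_mul]; ring
    rw [he] at h
    simp only [smul_eq_mul] at h
    linarith
  simp only [lamt, Real.logb]
  push_cast
  simp only [← mul_div_assoc]
  rw [div_sub_div_same, div_sub_div_same, div_le_div_iff₀ hlog2 hlog2]
  have hkey2 : ((n:ℝ) + 1) * Real.log ((n:ℝ) + 1) - (n:ℝ) * Real.log (n:ℝ) ≤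
      ((n:ℝ) + 1 + 1) * Real.log ((n:ℝ) + 1 + 1) - ((n:ℝ) + 1) * Real.log ((n:ℝ) + 1) := by
    have : ((n:ℝ) + 1 + 1) = (n:ℝ) + 2 := by ring
    rw [this]
    linarith
  exact mul_le_mul_of_nonneg_right hkey2 hlog2.le

lemma lamt_nonneg (i : ℕ) : 0 ≤ lamt i := lamt_zero ▸ lamt_mono (Nat.zero_le i)

lemma lamt_one : lamt 1 = 2 := by
  have h2 : Real.logb 2 2 = 1 := Real.logb_self_eq_one (by norm_num)
  norm_num [lamt, h2]

lemma two_le_lamt {i : ℕ} (hi : 1 ≤ i) : 2 ≤ lamt i := lamt_one ▸ lamt_mono hi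

variable {X : Type*} {f : X → ℝ} {r : ℕ → ℝ}

lemma level_finite (hf : Summable f) {t : ℝ} (ht : 0 < t) : {x | t < f x}.Finite := by
  have h := hf.tendsto_cofinite_zero (Metric.ball_mem_nhds 0 ht)
  rw [Filter.mem_map, Filter.mem_cofinite] at h
  refine h.subset fun x hx => ?_
  simp only [Set.mem_compl_iff, Set.mem_preimage, Metric.mem_ball, Real.dist_eq, sub_zero,
    not_lt]
  exact le_trans (le_of_lt hx) (le_abs_self _)

lemma rearr_nonneg (hd : Antitone r) (hs : Summable fun i => r i * lamt i) :
    ∀ i, 0 ≤ r i := by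
  by_contra hcon
  push_neg at hcon
  obtain ⟨k, hk⟩ := hcon
  have hterm : ∀ i, k + 1 ≤ i → r i * lamt i ≤ 2 * r k := by
    intro i hi
    have h1 : r i ≤ r k := hd (by omega)
    have h2 : (2:ℝ) ≤ lamt i := two_le_lamt (by omega)
    calc r i * lamt i ≤ r k * lamt i :=
          mul_le_mul_of_nonneg_right h1 (lamt_nonneg i)
      _ ≤ r k * 2 := mul_le_mul_of_nonpos_left h2 hk.le
      _ = 2 * r k := mul_comm _ _
  have hev : ∀ᶠ i in Filter.atTop, 2 * r k < r i * lamt i :=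
    hs.tendsto_atTop_zero.eventually (eventually_gt_nhds (by linarith))
  obtain ⟨i, hi1, hi2⟩ := (hev.and (Filter.eventually_ge_atTop (k+1))).exists
  exact absurd (hterm i hi2) (not_le.2 hi1)

lemma rearr_char (hd : IsDescRearrange f r) (hs : Summable fun i => r i * lamt i) :
    ∀ t : ℝ, 0 < t → ∀ k, (t < r k ↔ k < {x | t < f x}.ncard) := by
  intro t ht k
  set S := {i | t < r i} with hS
  have hdown : ∀ i j, i ≤ j → j ∈ S → i ∈ S := fun i j hij hj =>
    lt_of_lt_of_le hj (hd.1 hij)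
  have hfin : S.Finite := by
    by_contra hinf
    have hinf : S.Infinite := hinf
    have hall : ∀ i, i ∈ S := by
      intro i
      obtain ⟨j, hj, hij⟩ := hinf.exists_gt i
      exact hdown i j hij.le hj
    have hterm : ∀ i, 1 ≤ i → 2 * t ≤ r i * lamt i := by
      intro i hi
      have h1 : t ≤ r i := le_of_lt (hall i)
      have h2 : (2:ℝ) ≤ lamt i := two_le_lamt hi
      calc (2:ℝ) * t = t * 2 := mul_comm _ _
        _ ≤ t * lamt i := mul_le_mul_of_nonneg_left h2 ht.le
        _ ≤ r i * lamt i := mul_le_mul_of_nonneg_right h1 (lamt_nonneg i)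
    have hev : ∀ᶠ i in Filter.atTop, r i * lamt i < 2 * t :=
      hs.tendsto_atTop_zero.eventually (eventually_lt_nhds (by linarith))
    obtain ⟨i, hi1, hi2⟩ := (hev.and (Filter.eventually_ge_atTop 1)).exists
    exact absurd (hterm i hi2) (not_le.2 hi1)
  have hcard : {x | t < f x}.ncard = S.ncard := hd.2 t ht
  rw [hcard]
  constructor
  · intro h
    have hsub : Set.Iic k ⊆ S := fun i hi => hdown i k hi h
    have h1 : (Set.Iic k).ncard ≤ S.ncard := Set.ncard_le_ncard hsub hfin
    have h2 : (Set.Iic k).ncard = k + 1 := by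
      rw [← Finset.coe_Iic, Set.ncard_coe_finset, Nat.card_Iic]
    omega
  · intro h
    by_contra hk
    have hsub : S ⊆ Set.Iio k := by
      intro j hj
      by_contra hjk
      rw [Set.mem_Iio, not_lt] at hjk
      exact hk (hdown k j hjk hj)
    have h1 : S.ncard ≤ (Set.Iio k).ncard := Set.ncard_le_ncard hsub (Set.finite_Iio k)
    have h2 : (Set.Iio k).ncard = k := by
      rw [← Finset.coe_Iio, Set.ncard_coe_finset, Nat.card_Iio]
    omega

/-- Any finite sum of `f` over at most `k` elements is at most the top-`k` sum of `r`. -/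
lemma rearr_sum_le (hf : Summable f)
    (hr0 : ∀ i, 0 ≤ r i)
    (hchar : ∀ t : ℝ, 0 < t → ∀ k, (t < r k ↔ k < {x | t < f x}.ncard)) :
    ∀ k (S : Finset X), S.card ≤ k → ∑ x ∈ S, f x ≤ ∑ i ∈ Finset.range k, r i := by
  classical
  intro k
  induction k with
  | zero =>
    intro S hS
    rw [Nat.le_zero, Finset.card_eq_zero] at hS
    simp [hS]
  | succ k ih =>
    intro S hS
    by_cases hc : S.card ≤ k
    · calc ∑ x ∈ S, f x ≤ ∑ i ∈ Finset.range k, r i := ih S hc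
        _ ≤ ∑ i ∈ Finset.range (k+1), r i := by
            rw [Finset.sum_range_succ]
            have := hr0 k
            linarith
    · have hck : S.card = k + 1 := by omega
      have hne : S.Nonempty := Finset.card_pos.1 (by omega)
      obtain ⟨x₀, hx₀S, hx₀⟩ := S.exists_min_image f hne
      have hf0 : r k ≥ 0 := hr0 k
      have hfk : f x₀ ≤ r k := by
        by_contra hgt
        push_neg at hgt
        set t := (r k + f x₀) / 2 with htdef
        have ht0 : 0 < t := by simp only [htdef]; linarith
        have ht1 : r k < t := by simp only [htdef]; linarith
        have ht2 : t < f x₀ := by simp only [htdef]; linarith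
        have hsub : (S : Set X) ⊆ {x | t < f x} := fun x hx =>
          lt_of_lt_of_le ht2 (hx₀ x hx)
        have hcard : k + 1 ≤ {x | t < f x}.ncard := by
          have := Set.ncard_le_ncard hsub (level_finite hf ht0)
          rwa [Set.ncard_coe_finset, hck] at this
        have := (hchar t ht0 k).2 (by omega)
        linarith
      calc ∑ x ∈ S, f x = ∑ x ∈ S.erase x₀, f x + f x₀ :=
            (Finset.sum_erase_add S f hx₀S).symm
        _ ≤ ∑ i ∈ Finset.range k, r i + r k := by
            refine add_le_add (ih _ ?_) hfk
            rw [Finset.card_erase_of_mem hx₀S, hck]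
            omega
        _ = ∑ i ∈ Finset.range (k+1), r i := (Finset.sum_range_succ r k).symm

lemma exists_threshold (c : ℝ) (hc : 0 < c) (W : Finset ℝ) :
    ∃ t : ℝ, c / 2 ≤ t ∧ 0 < t ∧ t < c ∧ ∀ v ∈ W, v < c → v ≤ t := by
  classical
  set W' : Finset ℝ := insert (c/2) (W.filter (fun v => v < c)) with hW'
  have hne : W'.Nonempty := ⟨c/2, Finset.mem_insert_self _ _⟩
  refine ⟨W'.max' hne, Finset.le_max' _ _ (Finset.mem_insert_self _ _), ?_, ?_, ?_⟩
  · have := Finset.le_max' W' (c/2) (Finset.mem_insert_self _ _)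
    linarith
  · rw [Finset.max'_lt_iff]
    intro v hv
    rw [hW'] at hv
    rcases Finset.mem_insert.1 hv with h | h
    · rw [h]; linarith
    · exact (Finset.mem_filter.1 h).2
  · intro v hv hvc
    exact Finset.le_max' W' v (Finset.mem_insert_of_mem (Finset.mem_filter.2 ⟨hv, hvc⟩))

/-- The top-`k` sum of `r` is attained (dominated) by a sum of `f` over at most `k`
elements. -/
lemma rearr_le_sum (hf : Summable f) (hf0 : ∀ x, 0 ≤ f x)
    (hd : Antitone r) (hr0 : ∀ i, 0 ≤ r i)
    (hchar : ∀ t : ℝ, 0 < t → ∀ k, (t < r k ↔ k < {x | t < f x}.ncard)) :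
    ∀ k, ∃ T : Finset X, T.card ≤ k ∧ (∀ x ∈ T, r k ≤ f x) ∧
      ∑ i ∈ Finset.range k, r i ≤ ∑ x ∈ T, f x := by
  classical
  intro k
  induction k with
  | zero => exact ⟨∅, by simp, by simp, by simp⟩
  | succ k ih =>
    obtain ⟨T, hTcard, hTmem, hTsum⟩ := ih
    by_cases hrk : r k ≤ 0
    · have hrk0 : r k = 0 := le_antisymm hrk (hr0 k)
      refine ⟨T, by omega, ?_, ?_⟩
      · intro x hx
        exact (hd (Nat.le_succ k)).trans (hTmem x hx)
      · rw [Finset.sum_range_succ, hrk0, add_zero]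
        exact hTsum
    · push_neg at hrk
      -- find a threshold t just below r k
      have hFfin : {x | r k / 2 < f x}.Finite := level_finite hf (by linarith)
      obtain ⟨t, ht_half, ht0, htc, htW⟩ :=
        exists_threshold (r k) hrk (hFfin.toFinset.image f)
      -- the set G of elements with f x ≥ r k
      set G : Set X := {x | r k ≤ f x} with hG
      have hGfin : G.Finite := by
        refine hFfin.subset fun x hx => ?_
        simp only [hG, Set.mem_setOf_eq] at hx ⊢
        linarith
      have hsubG : {x | t < f x} ⊆ G := by
        intro x hx
        simp only [Set.mem_setOf_eq] at hx
        have hxF : x ∈ hFfin.toFinset := by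
          simp only [Set.Finite.mem_toFinset, Set.mem_setOf_eq]
          linarith
        by_contra hxG
        simp only [hG, Set.mem_setOf_eq, not_le] at hxG
        have : f x ≤ t := htW (f x) (Finset.mem_image_of_mem f hxF) hxG
        linarith
      have hcardG : k < G.ncard :=
        lt_of_lt_of_le ((hchar t ht0 k).1 htc) (Set.ncard_le_ncard hsubG hGfin)
      -- pick a new element in G outside T
      have hTsubG : T ⊆ hGfin.toFinset := by
        intro x hx
        simp only [Set.Finite.mem_toFinset, hG, Set.mem_setOf_eq]
        exact hTmem x hx
      have hex : ∃ x ∈ hGfin.toFinset, x ∉ T := by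
        by_contra hcon
        push_neg at hcon
        have : hGfin.toFinset ⊆ T := hcon
        have h1 := Finset.card_le_card this
        have h2 : G.ncard = hGfin.toFinset.card :=
          Set.ncard_eq_toFinset_card G hGfin
        omega
      obtain ⟨x, hxG, hxT⟩ := hex
      have hxGset : r k ≤ f x := by
        simpa [hG, Set.Finite.mem_toFinset] using hxG
      refine ⟨insert x T, ?_, ?_, ?_⟩
      · rw [Finset.card_insert_of_notMem hxT]; omega
      · intro y hy
        rw [Finset.mem_insert] at hy
        have hstep : r (k+1) ≤ r k := hd (by omega)
        rcases hy with rfl | hy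
        · linarith
        · exact hstep.trans (hTmem y hy)
      · rw [Finset.sum_range_succ, Finset.sum_insert hxT]
        linarith [hTsum, hxGset]

lemma rearr_summable (hf : Summable f) (hf0 : ∀ x, 0 ≤ f x)
    (hd : Antitone r) (hr0 : ∀ i, 0 ≤ r i)
    (hchar : ∀ t : ℝ, 0 < t → ∀ k, (t < r k ↔ k < {x | t < f x}.ncard)) :
    Summable r ∧ ∑' i, r i = ∑' x, f x := by
  have hbound : ∀ n, ∑ i ∈ Finset.range n, r i ≤ ∑' x, f x := by
    intro n
    obtain ⟨T, _, _, hTsum⟩ := rearr_le_sum hf hf0 hd hr0 hchar n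
    exact hTsum.trans (Summable.sum_le_tsum T (fun x _ => hf0 x) hf)
  have hsum : Summable r := summable_of_sum_range_le hr0 hbound
  refine ⟨hsum, le_antisymm (Summable.tsum_le_of_sum_range_le hsum hbound) ?_⟩
  refine Summable.tsum_le_of_sum_le hf fun S => ?_
  calc ∑ x ∈ S, f x ≤ ∑ i ∈ Finset.range S.card, r i :=
        rearr_sum_le hf hr0 hchar S.card S le_rfl
    _ ≤ ∑' i, r i := Summable.sum_le_tsum _ (fun i _ => hr0 i) hsum

/-- Fubini / summation by parts: rewrite `∑ r i * lamt i` in terms of tails. -/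
lemma tsum_lamt_eq (hr0 : ∀ i, 0 ≤ r i) (hrs : Summable r)
    (hs : Summable fun i => r i * lamt i) :
    Summable (fun j => (lamt (j+1) - lamt j) * ∑' i, r (i + (j+1))) ∧
    ∑' i, r i * lamt i = ∑' j, (lamt (j+1) - lamt j) * ∑' i, r (i + (j+1)) := by
  classical
  set d : ℕ → ℝ := fun j => lamt (j+1) - lamt j with hd
  have hd0 : ∀ j, 0 ≤ d j := fun j => sub_nonneg.2 (lamt_mono (Nat.le_succ j))
  have hlam : ∀ i, lamt i = ∑ j ∈ Finset.range i, d j := by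
    intro i
    rw [hd, Finset.sum_range_sub lamt, lamt_zero, sub_zero]
  set F : ℕ × ℕ → ℝ := fun ij => if ij.2 < ij.1 then r ij.1 * d ij.2 else 0 with hF
  have hF0 : ∀ ij, 0 ≤ F ij := by
    intro ij
    simp only [hF]
    split
    · exact mul_nonneg (hr0 _) (hd0 _)
    · exact le_refl 0
  have hFi : ∀ i, Summable fun j => F (i, j) := by
    intro i
    apply summable_of_ne_finset_zero (s := Finset.range i)
    intro j hj
    simp only [Finset.mem_range] at hj
    simp [hF, hj]
  have hFisum : ∀ i, ∑' j, F (i, j) = r i * lamt i := by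
    intro i
    rw [tsum_eq_sum (s := Finset.range i) (fun j hj => by
      simp only [Finset.mem_range] at hj; simp [hF, hj])]
    rw [hlam i, Finset.mul_sum]
    refine Finset.sum_congr rfl fun j hj => ?_
    simp only [Finset.mem_range] at hj
    simp [hF, hj]
  have hFsummable : Summable F := by
    rw [summable_prod_of_nonneg hF0]
    exact ⟨hFi, by simp only [hFisum]; exact hs⟩
  have hswap : Summable fun ji : ℕ × ℕ => F (ji.2, ji.1) := by
    have := (Equiv.prodComm ℕ ℕ).summable_iff.2 hFsummable
    exact this
  have hGj : ∀ j, Summable fun i => F (i, j) := by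
    intro j
    refine Summable.of_nonneg_of_le (fun i => hF0 (i, j)) (fun i => ?_) (hrs.mul_right (d j))
    simp only [hF]
    split
    · exact le_refl _
    · exact mul_nonneg (hr0 _) (hd0 _)
  have hGsum : ∀ j, ∑' i, F (i, j) = d j * ∑' i, r (i + (j+1)) := by
    intro j
    rw [← Summable.sum_add_tsum_nat_add (j+1) (hGj j)]
    have h1 : ∑ i ∈ Finset.range (j+1), F (i, j) = 0 := by
      refine Finset.sum_eq_zero fun i hi => ?_
      simp only [Finset.mem_range] at hi
      have hji : ¬ j < i := by omega
      simp [hF, hji]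
    have h2 : ∀ i : ℕ, F (i + (j+1), j) = d j * r (i + (j+1)) := by
      intro i
      have hji : j < i + (j+1) := by omega
      simp [hF, hji, mul_comm]
    rw [h1, zero_add]
    rw [tsum_congr h2, tsum_mul_left]
  have hkey : Summable (fun j => ∑' i, F (i, j)) := by
    have := (summable_prod_of_nonneg (f := fun ji : ℕ × ℕ => F (ji.2, ji.1))
      (fun ji => hF0 _)).1 hswap
    exact this.2
  constructor
  · have := hkey
    simp only [hGsum] at this
    exact this
  · have e1 : ∑' ij : ℕ × ℕ, F ij = ∑' i, ∑' j, F (i, j) := Summable.tsum_prod' hFsummable hFi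
    have e2 : ∑' ji : ℕ × ℕ, F (ji.2, ji.1) = ∑' j, ∑' i, F (i, j) :=
      Summable.tsum_prod' hswap (fun j => hGj j)
    have e3 : ∑' ji : ℕ × ℕ, F (ji.2, ji.1) = ∑' ij : ℕ × ℕ, F ij := by
      have := (Equiv.prodComm ℕ ℕ).tsum_eq F
      exact this
    calc ∑' i, r i * lamt i = ∑' i, ∑' j, F (i, j) := by
          refine tsum_congr fun i => (hFisum i).symm
      _ = ∑' ij : ℕ × ℕ, F ij := e1.symm
      _ = ∑' j, ∑' i, F (i, j) := by rw [← e3, e2]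
      _ = ∑' j, d j * ∑' i, r (i + (j+1)) := tsum_congr hGsum

end Aux

/-- concavity of the discrete layered entropy:
`Λ(λp + (1−λ)q) ≥ λΛ(p) + (1−λ)Λ(q)`. -/
theorem stmt5 {X : Type*} (p q : X → ℝ) (a : ℝ) (ha0 : 0 ≤ a) (ha1 : a ≤ 1)
    (hp : IsPMF p) (hq : IsPMF q)
    (rp rq rm : ℕ → ℝ)
    (hrp : IsDescRearrange p rp) (hrq : IsDescRearrange q rq)
    (hrm : IsDescRearrange (fun x => a * p x + (1 - a) * q x) rm)
    (hsp : Summable (fun i => rp i * lamt i))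
    (hsq : Summable (fun i => rq i * lamt i))
    (hsm : Summable (fun i => rm i * lamt i)) :
    a * (∑' i : ℕ, rp i * lamt i) + (1 - a) * (∑' i : ℕ, rq i * lamt i)
      ≤ ∑' i : ℕ, rm i * lamt i := by
  classical
  have ha1' : 0 ≤ 1 - a := by linarith
  set m : X → ℝ := fun x => a * p x + (1 - a) * q x with hm_def
  have hm0 : ∀ x, 0 ≤ m x := fun x =>
    add_nonneg (mul_nonneg ha0 (hp.1 x)) (mul_nonneg ha1' (hq.1 x))
  have hmsum : HasSum m 1 := by
    have h := (hp.2.mul_left a).add (hq.2.mul_left (1 - a))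
    simpa [hm_def] using h
  -- nonnegativity of the rearrangements
  have hrp0 := rearr_nonneg hrp.1 hsp
  have hrq0 := rearr_nonneg hrq.1 hsq
  have hrm0 := rearr_nonneg hrm.1 hsm
  -- characterization of the rearrangements
  have hcp := rearr_char hrp hsp
  have hcq := rearr_char hrq hsq
  have hcm := rearr_char hrm hsm
  -- summability and totals
  obtain ⟨hsump, htotp⟩ := rearr_summable hp.2.summable hp.1 hrp.1 hrp0 hcp
  obtain ⟨hsumq, htotq⟩ := rearr_summable hq.2.summable hq.1 hrq.1 hrq0 hcq
  obtain ⟨hsumm, htotm⟩ := rearr_summable hmsum.summable hm0 hrm.1 hrm0 hcm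
  rw [hp.2.tsum_eq] at htotp
  rw [hq.2.tsum_eq] at htotq
  rw [hmsum.tsum_eq] at htotm
  -- head majorization
  have hhead : ∀ k, ∑ i ∈ Finset.range k, rm i ≤
      a * ∑ i ∈ Finset.range k, rp i + (1 - a) * ∑ i ∈ Finset.range k, rq i := by
    intro k
    obtain ⟨T, hTcard, _, hTsum⟩ :=
      rearr_le_sum hmsum.summable hm0 hrm.1 hrm0 hcm k
    have hsplit : ∑ x ∈ T, m x = a * ∑ x ∈ T, p x + (1 - a) * ∑ x ∈ T, q x := by
      simp only [hm_def, Finset.sum_add_distrib, Finset.mul_sum]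
    have h1 : ∑ x ∈ T, p x ≤ ∑ i ∈ Finset.range k, rp i :=
      rearr_sum_le hp.2.summable hrp0 hcp k T hTcard
    have h2 : ∑ x ∈ T, q x ≤ ∑ i ∈ Finset.range k, rq i :=
      rearr_sum_le hq.2.summable hrq0 hcq k T hTcard
    calc ∑ i ∈ Finset.range k, rm i ≤ ∑ x ∈ T, m x := hTsum
      _ = a * ∑ x ∈ T, p x + (1 - a) * ∑ x ∈ T, q x := hsplit
      _ ≤ a * ∑ i ∈ Finset.range k, rp i + (1 - a) * ∑ i ∈ Finset.range k, rq i :=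
          add_le_add (mul_le_mul_of_nonneg_left h1 ha0)
            (mul_le_mul_of_nonneg_left h2 ha1')
  -- tail comparison
  have htail : ∀ k, a * (∑' i, rp (i + k)) + (1 - a) * (∑' i, rq (i + k)) ≤
      ∑' i, rm (i + k) := by
    intro k
    have e1 : ∑ i ∈ Finset.range k, rp i + ∑' i, rp (i + k) = 1 := by
      rw [Summable.sum_add_tsum_nat_add k hsump, htotp]
    have e2 : ∑ i ∈ Finset.range k, rq i + ∑' i, rq (i + k) = 1 := by
      rw [Summable.sum_add_tsum_nat_add k hsumq, htotq]
    have e3 : ∑ i ∈ Finset.range k, rm i + ∑' i, rm (i + k) = 1 := by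
      rw [Summable.sum_add_tsum_nat_add k hsumm, htotm]
    have h := hhead k
    nlinarith [h, e1, e2, e3]
  -- rewrite all three layered entropies via tails
  obtain ⟨hsump', heqp⟩ := tsum_lamt_eq hrp0 hsump hsp
  obtain ⟨hsumq', heqq⟩ := tsum_lamt_eq hrq0 hsumq hsq
  obtain ⟨hsumm', heqm⟩ := tsum_lamt_eq hrm0 hsumm hsm
  rw [heqp, heqq, heqm]
  rw [← tsum_mul_left, ← tsum_mul_left,
    ← Summable.tsum_add (hsump'.mul_left a) (hsumq'.mul_left (1 - a))]
  refine Summable.tsum_le_tsum (fun j => ?_) ((hsump'.mul_left a).add (hsumq'.mul_left (1 - a)))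
    hsumm'
  have hd0 : 0 ≤ lamt (j+1) - lamt j := sub_nonneg.2 (lamt_mono (Nat.le_succ j))
  have ht := htail (j+1)
  calc a * ((lamt (j+1) - lamt j) * ∑' i, rp (i + (j+1)))
        + (1 - a) * ((lamt (j+1) - lamt j) * ∑' i, rq (i + (j+1)))
      = (lamt (j+1) - lamt j) *
          (a * (∑' i, rp (i + (j+1))) + (1 - a) * (∑' i, rq (i + (j+1)))) := by ring
    _ ≤ (lamt (j+1) - lamt j) * ∑' i, rm (i + (j+1)) :=
        mul_le_mul_of_nonneg_left ht hd0
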